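/- arXiv:0808.3247 — 4 statements merged into one kernel-verified Lean document; each statement's English description precedes it below -/
import Mathlib

section
/- Theorem 2 (maximal inequality for martingales over σ-finite measure). Let (X, Σ, μ) be a σ-finite measure space, let (𝔽_n)_{n≥1} be a filtration of sub-σ-algebras of Σ such that μ restricted to each 𝔽_n is σ-finite, and let (S_n)_{n≥1} be a martingale with respect to (𝔽_n) (each S_n integrable, 𝔽_n-measurable, with conditional expectation of S_{n+1} given 𝔽_n equal to S_n a.e.), such that S_n ∈ L^p(μ) for all p ∈ (a,b), where 1 < a < b ≤ ∞ and ψ ∈ Ψ(a,b). Let γ > 0 and L : {1,2,…} → (0,∞) satisfy C₂ := sup_{n≥1} L(2n)/L(n) < ∞; set σ(n) = n^γ L(n) and assume n ↦ σ(n) is nondecreasing. Assume K := sup_{n≥1} sup_{p∈(a,b)} ‖S_n‖_{L^p(μ)}/(ψ(p)·σ(n)) < ∞. Let v : {1,2,…} → (0,∞) be nondecreasing with V := Σ_{k=1}^∞ 1/v(2^{k−1}) < ∞. Then, with ψ₁(p) = p·ψ(p)/(p − 1) for p ∈ (a,b), the maximal function τ = sup_{n≥1} |S_n|/(v(n)·σ(n))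 satisfies ‖τ‖_{G(ψ₁)} ≤ 2^γ · C₂ · V · K. -/
open MeasureTheory ENNReal Set

noncomputable section

/-- The set of exponents p with a < p and p < b (b may be infinite). -/
def expSet (a : ℝ) (b : ℝ≥0∞) : Set ℝ := {p : ℝ | a < p ∧ ENNReal.ofReal p < b}

/-- The class Ψ(a,b). -/
structure IsPsi (a : ℝ) (b : ℝ≥0∞) (ψ : ℝ → ℝ) : Prop where
  one_le : ∀ p ∈ expSet a b, 1 ≤ ψ p
  bddOnCompacts : ∀ c d : ℝ, c ∈ expSet a b → d ∈ expSet a b → BddAbove (ψ '' Set.Icc c d)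
  logConvex : ConvexOn ℝ (expSet a b) fun p => Real.log (ψ p)

/-- L^p norm (real exponent). -/
def lpNorm {X : Type*} [MeasurableSpace X] (μ : Measure X) (f : X → ℝ) (p : ℝ) : ℝ≥0∞ :=
  (∫⁻ x, ENNReal.ofReal (|f x| ^ p) ∂μ) ^ (1 / p)

/-- Bilateral Grand Lebesgue norm. -/
def glNorm {X : Type*} [MeasurableSpace X] (μ : Measure X) (a : ℝ) (b : ℝ≥0∞) (ψ : ℝ → ℝ)
    (f : X → ℝ) : ℝ≥0∞ :=
  ⨆ p ∈ expSet a b, lpNorm μ f p / ENNReal.ofReal (ψ p)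

/-- L^p norm for extended-real-valued functions. -/
def lpNormE {X : Type*} [MeasurableSpace X] (μ : Measure X) (g : X → EReal) (p : ℝ) : ℝ≥0∞ :=
  (∫⁻ x, (g x).abs ^ p ∂μ) ^ (1 / p)

/-- Bilateral Grand Lebesgue norm for extended-real-valued functions. -/
def glNormE {X : Type*} [MeasurableSpace X] (μ : Measure X) (a : ℝ) (b : ℝ≥0∞) (ψ : ℝ → ℝ)
    (g : X → EReal) : ℝ≥0∞ :=
  ⨆ p ∈ expSet a b, lpNormE μ g p / ENNReal.ofReal (ψ p)

/-- L^p norm for `ℝ≥0∞`-valued functions. -/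
def lpNormNN {X : Type*} [MeasurableSpace X] (μ : Measure X) (g : X → ℝ≥0∞) (p : ℝ) : ℝ≥0∞ :=
  (∫⁻ x, g x ^ p ∂μ) ^ (1 / p)

end

/-!
Split the indices `n ≥ 1` into dyadic blocks `2^k ≤ n < 2^(k+1)`. Since `v` and `σ` are
nondecreasing, on the `k`-th block `|S n| / (v n σ n)` is at most
`max_{m ≤ 2^(k+1)} |S m| / (v (2^k) σ (2^k))`, so `τ` is dominated by the series of these block
maxima. Doob's `L^p` inequality, obtained from the weak-type maximal inequality by the layer-cake
formula and Hölder, bounds the `L^p` norm of the `k`-th block maximum by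
`p / (p - 1) · K ψ(p) σ(2^(k+1))`, and the doubling bound `σ(2n) ≤ 2^γ C₂ σ(n)` turns the `k`-th
term into `ψ₁(p) 2^γ C₂ K / v(2^k)`. Minkowski's inequality for the series and summation over `k`
give `‖τ‖_p ≤ ψ₁(p) 2^γ C₂ V K`.
-/

noncomputable section

variable {X : Type*} {m0 : MeasurableSpace X} {μ : Measure X}

section LpNormNN

theorem lpNormNN_ofReal_abs (f : X → ℝ) {p : ℝ} (hp : 0 ≤ p) :
    lpNormNN μ (fun x => ENNReal.ofReal |f x|) p = lpNorm μ f p := by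
  simp only [lpNormNN, _root_.lpNorm, ENNReal.ofReal_rpow_of_nonneg (abs_nonneg _) hp]

theorem lpNormNN_mono {g h : X → ℝ≥0∞} (hgh : ∀ x, g x ≤ h x) {p : ℝ} (hp : 0 ≤ p) :
    lpNormNN μ g p ≤ lpNormNN μ h p := by
  unfold lpNormNN
  gcongr with x
  exact hgh x

theorem lpNormNN_const_mul {g : X → ℝ≥0∞} (hg : Measurable g) {p : ℝ} (hp : 0 < p) (c : ℝ≥0∞) :
    lpNormNN μ (fun x => c * g x) p = c * lpNormNN μ g p := by
  simp only [lpNormNN, ENNReal.mul_rpow_of_nonneg _ _ hp.le,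
    lintegral_const_mul _ (hg.pow_const p), ENNReal.mul_rpow_of_nonneg _ _ (one_div_nonneg.2 hp.le),
    ← ENNReal.rpow_mul, mul_one_div_cancel hp.ne', ENNReal.rpow_one]

theorem lpNormNN_finset_sum_le {ι : Type*} {s : Finset ι} {f : ι → X → ℝ≥0∞}
    (hf : ∀ i ∈ s, Measurable (f i)) {p : ℝ} (hp : 1 ≤ p) :
    lpNormNN μ (fun x => ∑ i ∈ s, f i x) p ≤ ∑ i ∈ s, lpNormNN μ (f i) p := by
  have h := eLpNorm'_sum_le (μ := μ) (fun i hi => (hf i hi).aestronglyMeasurable) hp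
  rwa [Finset.sum_fn] at h

theorem lpNormNN_iSup {g : ℕ → X → ℝ≥0∞} (hg : ∀ n, Measurable (g n)) (hmono : Monotone g)
    {p : ℝ} (hp : 0 < p) :
    lpNormNN μ (fun x => ⨆ n, g n x) p = ⨆ n, lpNormNN μ (g n) p := by
  have hpow : ∀ x, (⨆ n, g n x) ^ p = ⨆ n, g n x ^ p := fun x =>
    (ENNReal.orderIsoRpow p hp).map_iSup _
  simp only [lpNormNN, hpow]
  rw [lintegral_iSup (fun n => (hg n).pow_const p) fun m n hmn x =>
    ENNReal.rpow_le_rpow (hmono hmn x) hp.le]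
  exact (ENNReal.orderIsoRpow (1 / p) (one_div_pos.2 hp)).map_iSup _

theorem lpNormNN_tsum_le {f : ℕ → X → ℝ≥0∞} (hf : ∀ k, Measurable (f k)) {p : ℝ} (hp : 1 ≤ p) :
    lpNormNN μ (fun x => ∑' k, f k x) p ≤ ∑' k, lpNormNN μ (f k) p := by
  simp only [ENNReal.tsum_eq_iSup_nat]
  rw [lpNormNN_iSup (fun K => Finset.measurable_sum _ fun k _ => hf k)
    (fun K K' hK x => Finset.sum_le_sum_of_subset (Finset.range_subset_range.2 hK))
    (one_pos.trans_le hp)]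
  exact iSup_mono fun K => lpNormNN_finset_sum_le (fun k _ => hf k) hp

end LpNormNN

section WeakType

variable {M : X → ℝ} {g : X → ℝ≥0∞} {p : ℝ}

/-- Cavalieri's principle, applied once to `μ` and once to `μ.withDensity g`. -/
theorem lintegral_rpow_le_of_weakType (hM0 : ∀ x, 0 ≤ M x) (hM : Measurable M)
    (hg : Measurable g) (hp : 1 < p)
    (hweak : ∀ t, 0 < t → ENNReal.ofReal t * μ {x | t ≤ M x} ≤ ∫⁻ x in {x | t ≤ M x}, g x ∂μ) :
    ∫⁻ x, ENNReal.ofReal (M x) ^ p ∂μ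
      ≤ ENNReal.ofReal (p / (p - 1)) * ∫⁻ x, g x * ENNReal.ofReal (M x) ^ (p - 1) ∂μ := by
  have hp1 : 0 < p - 1 := sub_pos.2 hp
  set ν := μ.withDensity g
  have hlevel : ∀ t ∈ Ioi (0 : ℝ), μ {x | t ≤ M x} * ENNReal.ofReal (t ^ (p - 1))
      ≤ ν {x | t ≤ M x} * ENNReal.ofReal (t ^ (p - 1 - 1)) := fun t (ht : 0 < t) => by
    have htp : t ^ (p - 1) = t * t ^ (p - 1 - 1) := by
      rw [mul_comm, ← Real.rpow_add_one ht.ne', sub_add_cancel]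
    rw [withDensity_apply _ (measurableSet_le measurable_const hM), htp,
      ENNReal.ofReal_mul ht.le, ← mul_assoc, mul_comm (μ _)]
    gcongr
    exact hweak t ht
  simp only [ENNReal.ofReal_rpow_of_nonneg (hM0 _) (by linarith : (0 : ℝ) ≤ p),
    ENNReal.ofReal_rpow_of_nonneg (hM0 _) hp1.le]
  calc ∫⁻ x, ENNReal.ofReal (M x ^ p) ∂μ
      = ENNReal.ofReal p * ∫⁻ t in Ioi 0, μ {x | t ≤ M x} * ENNReal.ofReal (t ^ (p - 1)) :=
        lintegral_rpow_eq_lintegral_meas_le_mul μ (ae_of_all _ hM0) hM.aemeasurable (by linarith)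
    _ ≤ ENNReal.ofReal p * ∫⁻ t in Ioi 0, ν {x | t ≤ M x} * ENNReal.ofReal (t ^ (p - 1 - 1)) :=
        mul_le_mul_right (setLIntegral_mono' measurableSet_Ioi hlevel) _
    _ = ENNReal.ofReal p *
          ((ENNReal.ofReal (p - 1))⁻¹ * ∫⁻ x, ENNReal.ofReal (M x ^ (p - 1)) ∂ν) := by
        rw [lintegral_rpow_eq_lintegral_meas_le_mul ν (ae_of_all _ hM0) hM.aemeasurable hp1,
          ENNReal.inv_mul_cancel_left (by simpa using hp1) ENNReal.ofReal_ne_top]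
    _ = ENNReal.ofReal (p / (p - 1)) * ∫⁻ x, g x * ENNReal.ofReal (M x ^ (p - 1)) ∂μ := by
        rw [ENNReal.ofReal_div_of_pos hp1, div_eq_mul_inv, mul_assoc,
          lintegral_withDensity_eq_lintegral_mul μ hg (hM.pow_const _).ennreal_ofReal]
        rfl

theorem ENNReal.rpow_le_of_le_mul_rpow {I A : ℝ≥0∞} {s r : ℝ} (hs : 0 < s) (hsr : s + r = 1)
    (hI : I ≠ ⊤) (h : I ≤ A * I ^ r) : I ^ s ≤ A := by
  rcases eq_or_ne I 0 with rfl | hI0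
  · simp [ENNReal.zero_rpow_of_pos hs]
  rw [← ENNReal.mul_le_mul_iff_left (ENNReal.rpow_pos (pos_iff_ne_zero.2 hI0) hI).ne'
    (ENNReal.rpow_ne_top_of_nonneg' (pos_iff_ne_zero.2 hI0) hI), ← ENNReal.rpow_add _ _ hI0 hI,
    hsr, ENNReal.rpow_one]
  exact h

theorem lpNormNN_le_of_weakType (hM0 : ∀ x, 0 ≤ M x) (hM : Measurable M) (hg : Measurable g)
    (hp : 1 < p)
    (hweak : ∀ t, 0 < t → ENNReal.ofReal t * μ {x | t ≤ M x} ≤ ∫⁻ x in {x | t ≤ M x}, g x ∂μ)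
    (hfin : ∫⁻ x, ENNReal.ofReal (M x) ^ p ∂μ ≠ ⊤) :
    lpNormNN μ (fun x => ENNReal.ofReal (M x)) p
      ≤ ENNReal.ofReal (p / (p - 1)) * lpNormNN μ g p := by
  have hp0 : 0 < p := by linarith
  set I := ∫⁻ x, ENNReal.ofReal (M x) ^ p ∂μ
  have hholder : ∫⁻ x, g x * ENNReal.ofReal (M x) ^ (p - 1) ∂μ
      ≤ lpNormNN μ g p * I ^ (1 - 1 / p) := by
    have h := ENNReal.lintegral_mul_le_Lp_mul_Lq μ (Real.HolderConjugate.conjExponent hp)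
      hg.aemeasurable (hM.ennreal_ofReal.pow_const (p - 1)).aemeasurable
    have hexp : ∀ x, (ENNReal.ofReal (M x) ^ (p - 1)) ^ (p / (p - 1)) = ENNReal.ofReal (M x) ^ p :=
      fun x => by rw [← ENNReal.rpow_mul, mul_div_cancel₀ _ (sub_pos.2 hp).ne']
    simp only [Real.conjExponent, Pi.mul_apply, hexp] at h
    rwa [show 1 / (p / (p - 1)) = 1 - 1 / p by field_simp] at h
  refine ENNReal.rpow_le_of_le_mul_rpow (s := 1 / p) (r := 1 - 1 / p) (one_div_pos.2 hp0)
    (by ring) hfin ?_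
  calc I ≤ ENNReal.ofReal (p / (p - 1)) * ∫⁻ x, g x * ENNReal.ofReal (M x) ^ (p - 1) ∂μ :=
        lintegral_rpow_le_of_weakType hM0 hM hg hp hweak
    _ ≤ ENNReal.ofReal (p / (p - 1)) * (lpNormNN μ g p * I ^ (1 - 1 / p)) := by gcongr
    _ = _ := (mul_assoc _ _ _).symm

end WeakType

def runningMax (S : ℕ → X → ℝ) (N : ℕ) (x : X) : ℝ :=
  (Finset.range (N + 1)).sup' Finset.nonempty_range_add_one fun n => |S n x|

section RunningMax

variable {S : ℕ → X → ℝ} {N : ℕ}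

theorem le_runningMax_iff {ε : ℝ} {x : X} : ε ≤ runningMax S N x ↔ ∃ n ≤ N, ε ≤ |S n x| := by
  simp [runningMax, Finset.le_sup'_iff]

theorem abs_le_runningMax {n : ℕ} (hn : n ≤ N) (x : X) : |S n x| ≤ runningMax S N x :=
  le_runningMax_iff.2 ⟨n, hn, le_rfl⟩

theorem runningMax_nonneg (x : X) : 0 ≤ runningMax S N x :=
  (abs_nonneg _).trans (abs_le_runningMax N.zero_le x)

theorem ofReal_runningMax_le_sum (x : X) :
    ENNReal.ofReal (runningMax S N x) ≤ ∑ n ∈ Finset.range (N + 1), ENNReal.ofReal |S n x| := by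
  obtain ⟨n, hn, heq⟩ := Finset.exists_mem_eq_sup' Finset.nonempty_range_add_one fun n => |S n x|
  rw [runningMax, heq]
  exact Finset.single_le_sum (f := fun n => ENNReal.ofReal |S n x|) (fun _ _ => zero_le) hn

theorem measurable_runningMax (hS : ∀ n, Measurable (S n)) : Measurable (runningMax S N) :=
  Finset.measurable_range_sup'' fun n _ => (hS n).abs

end RunningMax

theorem iSup_div_le_tsum_runningMax {w : ℕ → ℝ} (hw : ∀ n, 1 ≤ n → 0 < w n)
    (hwmono : ∀ m n, 1 ≤ m → m ≤ n → w m ≤ w n) (S : ℕ → X → ℝ) (x : X) :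
    ⨆ n : ℕ, ⨆ _ : 1 ≤ n, ENNReal.ofReal (|S n x| / w n)
      ≤ ∑' k, ENNReal.ofReal ((w (2 ^ k))⁻¹ * runningMax S (2 ^ (k + 1)) x) := by
  refine iSup₂_le fun n hn => le_trans ?_ (ENNReal.le_tsum (Nat.log 2 n))
  have hlow : 2 ^ Nat.log 2 n ≤ n := Nat.pow_log_le_self 2 (by omega)
  have hhigh : n ≤ 2 ^ (Nat.log 2 n + 1) := (Nat.lt_pow_succ_log_self one_lt_two n).le
  refine ENNReal.ofReal_le_ofReal ?_
  rw [inv_mul_eq_div]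
  exact div_le_div₀ (runningMax_nonneg x) (abs_le_runningMax hhigh x)
    (hw _ Nat.one_le_two_pow) (hwmono _ _ Nat.one_le_two_pow hlow)

theorem rpow_mul_le_of_doubling {L : ℕ → ℝ} {C : ℝ} {n : ℕ} (hn : 0 < L n)
    (hL : L (2 * n) / L n ≤ C) (γ : ℝ) :
    ((2 * n : ℕ) : ℝ) ^ γ * L (2 * n) ≤ 2 ^ γ * C * ((n : ℝ) ^ γ * L n) := by
  rw [div_le_iff₀ hn] at hL
  rw [Nat.cast_mul, Nat.cast_two, Real.mul_rpow zero_le_two n.cast_nonneg]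
  calc 2 ^ γ * (n : ℝ) ^ γ * L (2 * n) ≤ 2 ^ γ * (n : ℝ) ^ γ * (C * L n) := by gcongr
    _ = 2 ^ γ * C * ((n : ℝ) ^ γ * L n) := by ring

namespace MeasureTheory.Martingale

variable {ℱ : Filtration ℕ m0} {S : ℕ → X → ℝ}

theorem setLIntegral_abs_le (hS : Martingale S ℱ μ) {n N : ℕ} (hnN : n ≤ N)
    {s : Set X} (hs : MeasurableSet[ℱ n] s) :
    ∫⁻ x in s, ENNReal.ofReal |S n x| ∂μ ≤ ∫⁻ x in s, ENNReal.ofReal |S N x| ∂μ := by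
  have habs : ∀ n, 0 ≤ᵐ[μ.restrict s] fun x => |S n x| := fun n =>
    ae_of_all _ fun x => abs_nonneg _
  rw [← ofReal_integral_eq_lintegral_ofReal (hS.integrable n).abs.integrableOn (habs n),
    ← ofReal_integral_eq_lintegral_ofReal (hS.integrable N).abs.integrableOn (habs N)]
  refine ENNReal.ofReal_le_ofReal ?_
  calc ∫ x in s, |S n x| ∂μ = ∫ x in s, |μ[S N | ℱ n] x| ∂μ :=
        integral_congr_ae (ae_restrict_of_ae ((hS.condExp_ae_eq hnN).fun_comp abs).symm)
    _ ≤ ∫ x in s, |S N x| ∂μ := setIntegral_abs_condExp_le hs _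

-- `MeasureTheory.maximal_ineq` is the same inequality, but only for finite measures.
theorem mul_meas_runningMax_ge_le (hS : Martingale S ℱ μ) (N : ℕ) (ε : ℝ) :
    ENNReal.ofReal ε * μ {x | ε ≤ runningMax S N x}
      ≤ ∫⁻ x in {x | ε ≤ runningMax S N x}, ENNReal.ofReal |S N x| ∂μ := by
  let A : ℕ → Set X := fun n => {x | ε ≤ |S n x|}
  have hA : ∀ n m, n ≤ m → MeasurableSet[ℱ m] (A n) := fun n m hnm =>
    continuous_abs.measurable.comp ((hS.stronglyAdapted n).mono (ℱ.mono hnm)).measurable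
      measurableSet_Ici
  -- `disjointed A n` is the set where `|S n|` is the first of the `|S m|` to reach `ε`
  have hfirst : ∀ n, MeasurableSet[ℱ n] (disjointed A n) := fun n => by
    rw [disjointed_eq_inter_compl]
    exact (hA n n le_rfl).inter (.biInter (to_countable _) fun m hm => (hA m n (le_of_lt hm)).compl)
  have hunion : {x | ε ≤ runningMax S N x} = ⋃ n ∈ Finset.range (N + 1), disjointed A n := by
    rw [biUnion_range_succ_disjointed, partialSups_eq_biUnion_range]
    ext x
    simp [A, le_runningMax_iff]
  have hdisj : PairwiseDisjoint ↑(Finset.range (N + 1)) (disjointed A) :=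
    (disjoint_disjointed A).set_pairwise _
  have hmeas : ∀ n ∈ Finset.range (N + 1), MeasurableSet (disjointed A n) := fun n _ =>
    ℱ.le n _ (hfirst n)
  rw [hunion, measure_biUnion_finset hdisj hmeas, lintegral_biUnion_finset hdisj hmeas,
    Finset.mul_sum]
  refine Finset.sum_le_sum fun n hn => ?_
  calc ENNReal.ofReal ε * μ (disjointed A n) = ∫⁻ _ in disjointed A n, ENNReal.ofReal ε ∂μ :=
        (setLIntegral_const _ _).symm
    _ ≤ ∫⁻ x in disjointed A n, ENNReal.ofReal |S n x| ∂μ :=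
        setLIntegral_mono' (hmeas n hn) fun x hx =>
          ENNReal.ofReal_le_ofReal (disjointed_subset A n hx)
    _ ≤ ∫⁻ x in disjointed A n, ENNReal.ofReal |S N x| ∂μ :=
        hS.setLIntegral_abs_le (Nat.lt_succ_iff.1 (Finset.mem_range.1 hn)) (hfirst n)

theorem lpNormNN_runningMax_le (hS : Martingale S ℱ μ) (N : ℕ) {p : ℝ} (hp : 1 < p)
    (hfin : ∀ n ≤ N, _root_.lpNorm μ (S n) p < ⊤) :
    lpNormNN μ (fun x => ENNReal.ofReal (runningMax S N x)) p
      ≤ ENNReal.ofReal (p / (p - 1)) * _root_.lpNorm μ (S N) p := by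
  have hp0 : 0 < p := by linarith
  have hSm : ∀ n, Measurable (S n) := fun n => ((hS.stronglyAdapted n).mono (ℱ.le n)).measurable
  have hmax_fin : lpNormNN μ (fun x => ENNReal.ofReal (runningMax S N x)) p < ⊤ := calc
    _ ≤ lpNormNN μ (fun x => ∑ n ∈ Finset.range (N + 1), ENNReal.ofReal |S n x|) p :=
        lpNormNN_mono ofReal_runningMax_le_sum hp0.le
    _ ≤ ∑ n ∈ Finset.range (N + 1), _root_.lpNorm μ (S n) p := by
        simpa only [lpNormNN_ofReal_abs _ hp0.le] using
          lpNormNN_finset_sum_le (fun n _ => (hSm n).abs.ennreal_ofReal) hp.le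
    _ < ⊤ := ENNReal.sum_lt_top.2 fun n hn => hfin n (Nat.lt_succ_iff.1 (Finset.mem_range.1 hn))
  rw [← lpNormNN_ofReal_abs _ hp0.le]
  refine lpNormNN_le_of_weakType runningMax_nonneg (measurable_runningMax hSm)
    (hSm N).abs.ennreal_ofReal hp (fun t _ => hS.mul_meas_runningMax_ge_le N t) ?_
  exact ((ENNReal.rpow_lt_top_iff_of_pos (one_div_pos.2 hp0)).1 hmax_fin).ne

theorem lpNormNN_const_mul_runningMax_le (hS : Martingale S ℱ μ) (N : ℕ) {p : ℝ} (hp : 1 < p)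
    (hfin : ∀ n ≤ N, _root_.lpNorm μ (S n) p < ⊤) {c B : ℝ} (hc : 0 ≤ c)
    (hB : _root_.lpNorm μ (S N) p ≤ ENNReal.ofReal B) :
    lpNormNN μ (fun x => ENNReal.ofReal (c * runningMax S N x)) p
      ≤ ENNReal.ofReal (c * (p / (p - 1) * B)) := by
  have hp0 : 0 < p := by linarith
  have hSm : ∀ n, Measurable (S n) := fun n => ((hS.stronglyAdapted n).mono (ℱ.le n)).measurable
  simp only [ENNReal.ofReal_mul hc]
  rw [lpNormNN_const_mul (measurable_runningMax hSm).ennreal_ofReal hp0,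
    ENNReal.ofReal_mul (div_nonneg hp0.le (sub_pos.2 hp).le)]
  gcongr
  exact (hS.lpNormNN_runningMax_le N hp hfin).trans (by gcongr)

theorem lpNormNN_iSup_div_le (hS : Martingale S ℱ μ) {p : ℝ} (hp : 1 < p)
    (hfin : ∀ n, _root_.lpNorm μ (S n) p < ⊤) {σ v : ℕ → ℝ} (hσ : ∀ n, 1 ≤ n → 0 < σ n)
    (hσmono : ∀ m n, 1 ≤ m → m ≤ n → σ m ≤ σ n) {D : ℝ}
    (hD : ∀ n, 1 ≤ n → σ (2 * n) ≤ D * σ n) (hv : ∀ n, 1 ≤ n → 0 < v n)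
    (hvmono : ∀ m n, 1 ≤ m → m ≤ n → v m ≤ v n) (hV : Summable fun k : ℕ => 1 / v (2 ^ k))
    {A : ℝ} (hA : 0 ≤ A)
    (hSσ : ∀ n, 1 ≤ n → _root_.lpNorm μ (S n) p ≤ ENNReal.ofReal (A * σ n)) :
    lpNormNN μ (fun x => ⨆ n : ℕ, ⨆ _ : 1 ≤ n, ENNReal.ofReal (|S n x| / (v n * σ n))) p
      ≤ ENNReal.ofReal (p / (p - 1) * D * A * ∑' k, 1 / v (2 ^ k)) := by
  have hp0 : 0 < p := by linarith
  have hSm : ∀ n, Measurable (S n) := fun n => ((hS.stronglyAdapted n).mono (ℱ.le n)).measurable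
  have hw : ∀ n, 1 ≤ n → 0 < v n * σ n := fun n hn => mul_pos (hv n hn) (hσ n hn)
  have hwmono : ∀ m n, 1 ≤ m → m ≤ n → v m * σ m ≤ v n * σ n := fun m n hm hmn =>
    mul_le_mul (hvmono m n hm hmn) (hσmono m n hm hmn) (hσ m hm).le (hv n (hm.trans hmn)).le
  have hD0 : 0 ≤ D :=
    (pos_of_mul_pos_left ((hσ 2 one_le_two).trans_le (hD 1 le_rfl)) (hσ 1 le_rfl).le).le
  set c := p / (p - 1) * D * A with hc_def
  have hblock : ∀ k, lpNormNN μ (fun x => ENNReal.ofReal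
      ((v (2 ^ k) * σ (2 ^ k))⁻¹ * runningMax S (2 ^ (k + 1)) x)) p
        ≤ ENNReal.ofReal (c * (1 / v (2 ^ k))) := fun k => by
    have hvk := hv (2 ^ k) Nat.one_le_two_pow
    have hσk := hσ (2 ^ k) Nat.one_le_two_pow
    have hdouble : σ (2 ^ (k + 1)) ≤ D * σ (2 ^ k) := pow_succ' 2 k ▸ hD _ Nat.one_le_two_pow
    refine (hS.lpNormNN_const_mul_runningMax_le _ hp (fun n _ => hfin n) (by positivity)
      (hSσ _ Nat.one_le_two_pow)).trans (ENNReal.ofReal_le_ofReal ?_)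
    have := sub_pos.2 hp
    calc _ ≤ (v (2 ^ k) * σ (2 ^ k))⁻¹ * (p / (p - 1) * (A * (D * σ (2 ^ k)))) := by gcongr
      _ = c * (1 / v (2 ^ k)) := by rw [hc_def]; field_simp
  calc _ ≤ lpNormNN μ (fun x => ∑' k, ENNReal.ofReal
        ((v (2 ^ k) * σ (2 ^ k))⁻¹ * runningMax S (2 ^ (k + 1)) x)) p :=
        lpNormNN_mono (iSup_div_le_tsum_runningMax hw hwmono S) hp0.le
    _ ≤ ∑' k, ENNReal.ofReal (c * (1 / v (2 ^ k))) :=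
        (lpNormNN_tsum_le (fun k => ((measurable_runningMax hSm).const_mul _).ennreal_ofReal)
          hp.le).trans (ENNReal.tsum_le_tsum hblock)
    _ = ENNReal.ofReal (c * ∑' k, 1 / v (2 ^ k)) := by
        rw [← ENNReal.ofReal_tsum_of_nonneg (fun k => ?_) (hV.mul_left c), tsum_mul_left]
        have := hv (2 ^ k) Nat.one_le_two_pow
        positivity

end MeasureTheory.Martingale

end

theorem martingale_maximal_BGL_general
    {X : Type*} {m0 : MeasurableSpace X} (μ : Measure X)
    (a : ℝ) (b : ℝ≥0∞) (ha : 1 < a)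
    (ψ : ℝ → ℝ) (hψ : IsPsi a b ψ)
    (ℱ : Filtration ℕ m0)
    (S : ℕ → X → ℝ) (hmart : Martingale S ℱ μ)
    (hSLp : ∀ n, ∀ p ∈ expSet a b, lpNorm μ (S n) p < ⊤)
    (γ : ℝ)
    (L : ℕ → ℝ) (hL : ∀ n, 1 ≤ n → 0 < L n)
    (C₂ : ℝ) (hC₂ : ∀ n, 1 ≤ n → L (2 * n) / L n ≤ C₂)
    (hσmono : ∀ m n : ℕ, 1 ≤ m → m ≤ n → (m : ℝ) ^ γ * L m ≤ (n : ℝ) ^ γ * L n)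
    (K : ℝ) (hK0 : 0 ≤ K)
    (hK : ∀ n, 1 ≤ n → ∀ p ∈ expSet a b,
      lpNorm μ (S n) p ≤ ENNReal.ofReal (K * ψ p * ((n : ℝ) ^ γ * L n)))
    (v : ℕ → ℝ) (hv : ∀ n, 1 ≤ n → 0 < v n)
    (hvmono : ∀ m n : ℕ, 1 ≤ m → m ≤ n → v m ≤ v n)
    (hV : Summable fun k : ℕ => 1 / v (2 ^ k)) :
    (⨆ p ∈ expSet a b,
        lpNormNN μ
          (fun x => ⨆ n : ℕ, ⨆ _ : 1 ≤ n,
            ENNReal.ofReal (|S n x| / (v n * ((n : ℝ) ^ γ * L n)))) p /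
          ENNReal.ofReal (p * ψ p / (p - 1))) ≤
      ENNReal.ofReal ((2 : ℝ) ^ γ * C₂ * (∑' k : ℕ, 1 / v (2 ^ k)) * K) := by
  refine iSup₂_le fun p hp => ENNReal.div_le_of_le_mul ?_
  have hp1 : 1 < p := ha.trans hp.1
  have hψp : 0 < ψ p := one_pos.trans_le (hψ.one_le p hp)
  calc _ ≤ ENNReal.ofReal (p / (p - 1) * (2 ^ γ * C₂) * (K * ψ p) * ∑' k, 1 / v (2 ^ k)) :=
        hmart.lpNormNN_iSup_div_le hp1 (fun n => hSLp n p hp)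
          (fun n hn => mul_pos (Real.rpow_pos_of_pos (Nat.cast_pos.2 hn) γ) (hL n hn)) hσmono
          (fun n hn => rpow_mul_le_of_doubling (hL n hn) (hC₂ n hn) γ) hv hvmono hV
          (by positivity) (fun n hn => hK n hn p hp)
    _ = ENNReal.ofReal (2 ^ γ * C₂ * (∑' k, 1 / v (2 ^ k)) * K)
          * ENNReal.ofReal (p * ψ p / (p - 1)) := by
        rw [← ENNReal.ofReal_mul' (div_nonneg (by positivity) (sub_pos.2 hp1).le)]
        congr 1
        field_simp

/-- Theorem 2 (maximal inequality for martingales over a σ-finite measure). -/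
theorem martingale_maximal_BGL
    {X : Type*} {m0 : MeasurableSpace X} (μ : Measure X) [SigmaFinite μ]
    (a : ℝ) (b : ℝ≥0∞) (ha : 1 < a) (hab : ENNReal.ofReal a < b)
    (ψ : ℝ → ℝ) (hψ : IsPsi a b ψ)
    (ℱ : Filtration ℕ m0) (hσfin : ∀ n, SigmaFinite (μ.trim (ℱ.le n)))
    (S : ℕ → X → ℝ) (hmart : Martingale S ℱ μ) (hint : ∀ n, Integrable (S n) μ)
    (hSLp : ∀ n, ∀ p ∈ expSet a b, lpNorm μ (S n) p < ⊤)
    (γ : ℝ) (hγ : 0 < γ)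
    (L : ℕ → ℝ) (hL : ∀ n, 1 ≤ n → 0 < L n)
    (C₂ : ℝ) (hC₂ : ∀ n, 1 ≤ n → L (2 * n) / L n ≤ C₂)
    (hσmono : ∀ m n : ℕ, 1 ≤ m → m ≤ n → (m : ℝ) ^ γ * L m ≤ (n : ℝ) ^ γ * L n)
    (K : ℝ) (hK0 : 0 ≤ K)
    (hK : ∀ n, 1 ≤ n → ∀ p ∈ expSet a b,
      lpNorm μ (S n) p ≤ ENNReal.ofReal (K * ψ p * ((n : ℝ) ^ γ * L n)))
    (v : ℕ → ℝ) (hv : ∀ n, 1 ≤ n → 0 < v n)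
    (hvmono : ∀ m n : ℕ, 1 ≤ m → m ≤ n → v m ≤ v n)
    (hV : Summable fun k : ℕ => 1 / v (2 ^ k)) :
    (⨆ p ∈ expSet a b,
        lpNormNN μ
          (fun x => ⨆ n : ℕ, ⨆ _ : 1 ≤ n,
            ENNReal.ofReal (|S n x| / (v n * ((n : ℝ) ^ γ * L n)))) p /
          ENNReal.ofReal (p * ψ p / (p - 1))) ≤
      ENNReal.ofReal ((2 : ℝ) ^ γ * C₂ * (∑' k : ℕ, 1 / v (2 ^ k)) * K) :=
  martingale_maximal_BGL_general μ a b ha ψ hψ ℱ S hmart hSLp γ L hL C₂ hC₂ hσmono K hK0 hK v hv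
    hvmono hV
end

section
/- Theorem 3 (maximal partial sums of Fourier series in Grand Lebesgue norms). Let X = [−π, π] with Lebesgue measure, let 1 < a < b ≤ ∞ and ψ ∈ Ψ(a,b). For a measurable f : [−π,π] → ℝ belonging to L^p for all p ∈ (a,b), define the Fourier coefficients c_n(f) = ∫_{−π}^{π} e^{inx} f(x) dx (n ∈ ℤ), the partial sums s_M[f](x) = (2π)^{−1} Σ_{|n|≤M} c_n(f) e^{−inx}, and the maximal function s*[f](x) = sup_{M≥1} |s_M[f](x)|. Assume the Carleson–Hunt maximal estimate: there is a constant C₀ such that for every p ∈ (1,∞) and every g ∈ L^p([−π,π]), ‖s*[g]‖_{L^p} ≤ C₀ · p^4 (p−1)^{−2} · ‖g‖_{L^p}. Then, with ψ₂(p) = p^4 ψ(p)/(p−1)^2 for p ∈ (a,b), every measurable f with ‖f‖_{G(ψ)} < ∞ satisfies ‖s*[f]‖_{G(ψ₂)} ≤ C₀ · ‖f‖_{G(ψ)}. -/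
open MeasureTheory ENNReal Set

noncomputable section Fourier

/-- Lebesgue measure on `[-π, π]`. -/
def muPi : Measure ℝ := volume.restrict (Set.Icc (-Real.pi) Real.pi)

/-- Fourier coefficients `c_n(f) = ∫_{-π}^{π} e^{inx} f(x) dx`. -/
def fourierCoef (f : ℝ → ℝ) (n : ℤ) : ℂ :=
  ∫ x, Complex.exp (Complex.I * n * x) * (f x : ℂ) ∂muPi

/-- Partial sums `s_M[f](x) = (2π)⁻¹ ∑_{|n| ≤ M} c_n(f) e^{-inx}`. -/
def fourierPartialSum (f : ℝ → ℝ) (M : ℕ) (x : ℝ) : ℂ :=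
  (2 * Real.pi : ℂ)⁻¹ *
    ∑ n ∈ Finset.Icc (-(M : ℤ)) (M : ℤ), fourierCoef f n * Complex.exp (-(Complex.I * n * x))

/-- Maximal function `s*[f](x) = sup_{M ≥ 1} |s_M[f](x)|` (with values in `ℝ≥0∞`). -/
def fourierMaximal (f : ℝ → ℝ) (x : ℝ) : ℝ≥0∞ :=
  ⨆ M : ℕ, ⨆ _ : 1 ≤ M, ENNReal.ofReal ‖fourierPartialSum f M x‖

lemma lpNorm_le_glNorm_mul {X : Type*} [MeasurableSpace X] (μ : Measure X) {a : ℝ}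
    {b : ℝ≥0∞} {ψ : ℝ → ℝ} {f : X → ℝ} {p : ℝ} (hp : p ∈ expSet a b) (hψp : 0 < ψ p) :
    lpNorm μ f p ≤ glNorm μ a b ψ f * ENNReal.ofReal (ψ p) := by
  rw [← ENNReal.div_le_iff (by simpa using hψp) ENNReal.ofReal_ne_top]
  exact le_iSup₂ (f := fun p (_ : p ∈ expSet a b) => lpNorm μ f p / ENNReal.ofReal (ψ p)) p hp

lemma iSup_lpNormNN_div_le_glNorm {X : Type*} [MeasurableSpace X] (μ : Measure X) {a : ℝ}
    {b : ℝ≥0∞} {ψ w : ℝ → ℝ} {C : ℝ} {f : X → ℝ} {g : X → ℝ≥0∞}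
    (hψ : ∀ p ∈ expSet a b, 0 < ψ p) (hw : ∀ p ∈ expSet a b, 0 ≤ w p)
    (hgf : ∀ p ∈ expSet a b, lpNormNN μ g p ≤ ENNReal.ofReal (C * w p) * lpNorm μ f p) :
    (⨆ p ∈ expSet a b, lpNormNN μ g p / ENNReal.ofReal (w p * ψ p)) ≤
      ENNReal.ofReal C * glNorm μ a b ψ f := by
  refine iSup₂_le fun p hp => ENNReal.div_le_of_le_mul ?_
  calc lpNormNN μ g p
      ≤ ENNReal.ofReal (C * w p) * (glNorm μ a b ψ f * ENNReal.ofReal (ψ p)) :=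
        (hgf p hp).trans (mul_le_mul_right (lpNorm_le_glNorm_mul μ hp (hψ p hp)) _)
    _ = ENNReal.ofReal C * glNorm μ a b ψ f * ENNReal.ofReal (w p * ψ p) := by
        rw [ENNReal.ofReal_mul' (hw p hp), ENNReal.ofReal_mul' (hψ p hp).le]
        ring

theorem fourier_maximal_BGL_general
    (a : ℝ) (b : ℝ≥0∞) (ha : 1 < a)
    (ψ : ℝ → ℝ) (hψ : IsPsi a b ψ)
    (C₀ : ℝ)
    (hCarlesonHunt : ∀ p : ℝ, 1 < p → ∀ g : ℝ → ℝ, Measurable g → lpNorm muPi g p < ⊤ →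
      lpNormNN muPi (fourierMaximal g) p ≤
        ENNReal.ofReal (C₀ * p ^ 4 / (p - 1) ^ 2) * lpNorm muPi g p)
    (f : ℝ → ℝ) (hf : Measurable f)
    (hfLp : ∀ p ∈ expSet a b, lpNorm muPi f p < ⊤) :
    (⨆ p ∈ expSet a b,
        lpNormNN muPi (fourierMaximal f) p / ENNReal.ofReal (p ^ 4 * ψ p / (p - 1) ^ 2)) ≤
      ENNReal.ofReal C₀ * glNorm muPi a b ψ f := by
  simp_rw [mul_div_right_comm _ (ψ _)]
  refine iSup_lpNormNN_div_le_glNorm muPi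
    (fun p hp => zero_lt_one.trans_le (hψ.one_le p hp)) (fun p _ => by positivity)
    fun p hp => ?_
  rw [← mul_div_assoc]
  exact hCarlesonHunt p (ha.trans hp.1) f hf (hfLp p hp)

/-- Theorem 3 (maximal partial sums of Fourier series in Grand Lebesgue norms). -/
theorem fourier_maximal_BGL
    (a : ℝ) (b : ℝ≥0∞) (ha : 1 < a) (hab : ENNReal.ofReal a < b)
    (ψ : ℝ → ℝ) (hψ : IsPsi a b ψ)
    (C₀ : ℝ)
    (hCarlesonHunt : ∀ p : ℝ, 1 < p → ∀ g : ℝ → ℝ, Measurable g → lpNorm muPi g p < ⊤ →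
      lpNormNN muPi (fourierMaximal g) p ≤
        ENNReal.ofReal (C₀ * p ^ 4 / (p - 1) ^ 2) * lpNorm muPi g p)
    (f : ℝ → ℝ) (hf : Measurable f)
    (hfLp : ∀ p ∈ expSet a b, lpNorm muPi f p < ⊤)
    (hfG : glNorm muPi a b ψ f < ⊤) :
    (⨆ p ∈ expSet a b,
        lpNormNN muPi (fourierMaximal f) p / ENNReal.ofReal (p ^ 4 * ψ p / (p - 1) ^ 2)) ≤
      ENNReal.ofReal C₀ * glNorm muPi a b ψ f :=
  fourier_maximal_BGL_general a b ha ψ hψ C₀ hCarlesonHunt f hf hfLp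

end Fourier
end

section
/- Proposition 6 (maximal inequality in moment rearrangement invariant form). Let 1 ≤ a < b ≤ ∞, let θ ∈ (0,1), let T be a countable set, and let Y(t) ∈ L^p(μ) for all t ∈ T and all p ∈ (a,b). Suppose that for each p ∈ (a,b) there are a nondecreasing sequence (F_k^{(p)})_{k≥0} of finite subsets of T with ⋃_k F_k^{(p)} = T, F_0^{(p)} = {t_0^{(p)}}, card(F_k^{(p)}) = N_k(p), such that F_k^{(p)} is a θ^k-net of T for the pseudometric d_p(t,s) = ‖Y(t) − Y(s)‖_{L^p(μ)}. Define h(p) = ‖sup_{t∈T} Y(t)‖_{L^p(μ)} and g(p) = ‖Y(t_0^{(p)})‖_{L^p(μ)} + Σ_{k=1}^∞ θ^{k−1} (N_k(p))^{1/p} for p ∈ (a,b). Then for every functional 𝒩 defined on functions from (a,b) to [0,∞] that is monotone (g₁ ≤ g₂ pointwise implies 𝒩(g₁) ≤ 𝒩(g₂)), one has 𝒩(h) ≤ 𝒩(g). -/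
open MeasureTheory ENNReal Set

/-!
Fix an exponent `p`. Choosing for every `k` and `t` a point `π k t ∈ F k` at `L^p` distance at most
`θ ^ k` from `t`, each `t ∈ F n` is joined to `t₀` by the chain `t, π (n-1) t, …`, so pointwise
`sup_t |Y t - Y t₀| ≤ ∑_k max_{s ∈ F (k+1)} |Y s - Y (π k s)|`. Bounding the `p`-th power of a
maximum of `N` functions by their sum shows that the `k`-th term has `L^p` norm at most
`θ ^ k * N ^ (1/p)`, and Minkowski's inequality for series sums these. This bounds `h p` by `g p`
for every `p`, and the monotonicity of `𝒩` does the rest.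
-/

namespace MeasureTheory

variable {X : Type*} [MeasurableSpace X] {μ : Measure X} {p : ℝ}

lemma eLpNorm'_iSup_of_monotone (hp : 0 < p) {f : ℕ → X → ℝ≥0∞}
    (hf : ∀ n, AEMeasurable (f n) μ) (hmono : Monotone f) :
    eLpNorm' (fun x => ⨆ n, f n x) p μ = ⨆ n, eLpNorm' (f n) p μ := by
  have rpow_iSup : ∀ {q : ℝ} (hq : 0 < q) (g : ℕ → ℝ≥0∞), (⨆ n, g n) ^ q = ⨆ n, g n ^ q :=
    fun hq g => (ENNReal.orderIsoRpow _ hq).map_iSup g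
  simp only [eLpNorm'_eq_lintegral_enorm, enorm_eq_self, rpow_iSup hp]
  rw [lintegral_iSup' (fun n => (hf n).pow_const p)
    (ae_of_all _ fun x _ _ hmn => ENNReal.rpow_le_rpow (hmono hmn x) hp.le)]
  exact rpow_iSup (one_div_pos.2 hp) _

lemma eLpNorm'_tsum_le (hp : 1 ≤ p) {f : ℕ → X → ℝ≥0∞} (hf : ∀ n, AEMeasurable (f n) μ) :
    eLpNorm' (fun x => ∑' n, f n x) p μ ≤ ∑' n, eLpNorm' (f n) p μ := by
  have hsum : ∀ N, AEMeasurable (fun x => ∑ n ∈ Finset.range N, f n x) μ :=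
    fun N => Finset.aemeasurable_fun_sum _ fun n _ => hf n
  simp only [ENNReal.tsum_eq_iSup_nat]
  rw [eLpNorm'_iSup_of_monotone (zero_lt_one.trans_le hp) hsum
    fun M N hMN x => Finset.sum_le_sum_of_subset (Finset.range_mono hMN)]
  refine iSup_mono fun N => ?_
  have := eLpNorm'_sum_le (s := Finset.range N) (fun n _ => (hf n).aestronglyMeasurable) hp
  rwa [Finset.sum_fn] at this

lemma eLpNorm'_biSup_le {ι : Type*} (hp : 0 < p) {s : Finset ι} {g : ι → X → ℝ≥0∞}
    (hg : ∀ i ∈ s, AEMeasurable (g i) μ) {c : ℝ≥0∞} (hc : ∀ i ∈ s, eLpNorm' (g i) p μ ≤ c) :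
    eLpNorm' (fun x => ⨆ i ∈ s, g i x) p μ ≤ c * (s.card : ℝ≥0∞) ^ (1 / p) := by
  have hp' : 0 < 1 / p := one_div_pos.2 hp
  have hpow : ∫⁻ x, (⨆ i ∈ s, g i x) ^ p ∂μ ≤ s.card * c ^ p := calc
    ∫⁻ x, (⨆ i ∈ s, g i x) ^ p ∂μ ≤ ∫⁻ x, ∑ i ∈ s, g i x ^ p ∂μ := by
      refine lintegral_mono fun x => ?_
      rw [show (⨆ i ∈ s, g i x) ^ p = ⨆ i ∈ s, g i x ^ p from
        (ENNReal.orderIsoRpow p hp).map_iSup₂ _]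
      exact iSup₂_le fun i hi => Finset.single_le_sum (f := fun i => g i x ^ p)
        (fun _ _ => zero_le) hi
    _ = ∑ i ∈ s, eLpNorm' (g i) p μ ^ p := by
      rw [lintegral_finsetSum' _ fun i hi => (hg i hi).pow_const p]
      simp only [← lintegral_rpow_enorm_eq_rpow_eLpNorm' hp, enorm_eq_self]
    _ ≤ ∑ _i ∈ s, c ^ p := Finset.sum_le_sum fun i hi => by gcongr; exact hc i hi
    _ = s.card * c ^ p := by rw [Finset.sum_const, nsmul_eq_mul]
  calc eLpNorm' (fun x => ⨆ i ∈ s, g i x) p μ ≤ (s.card * c ^ p) ^ (1 / p) := by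
        simp only [eLpNorm'_eq_lintegral_enorm, enorm_eq_self]; gcongr
    _ = c * (s.card : ℝ≥0∞) ^ (1 / p) := by
        rw [ENNReal.mul_rpow_of_nonneg _ _ hp'.le, ← ENNReal.rpow_mul, mul_one_div_cancel hp.ne',
          ENNReal.rpow_one, mul_comm]

section Chaining

variable {T E : Type*} [PseudoEMetricSpace E] {F : ℕ → Finset T} {t₀ : T} {π : ℕ → T → T}

lemma edist_le_sum_of_chain (f : T → E) (hF0 : F 0 = {t₀}) (hπ : ∀ k t, π k t ∈ F k) (n : ℕ) :
    ∀ t ∈ F n, edist (f t) (f t₀) ≤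
      ∑ k ∈ Finset.range n, ⨆ s ∈ F (k + 1), edist (f s) (f (π k s)) := by
  induction n with
  | zero =>
    intro t ht
    rw [hF0, Finset.mem_singleton] at ht
    simp [ht]
  | succ n ih =>
    intro t ht
    rw [Finset.sum_range_succ]
    calc edist (f t) (f t₀) ≤ edist (f (π n t)) (f t₀) + edist (f t) (f (π n t)) := by
          rw [add_comm]; exact edist_triangle _ _ _
      _ ≤ _ := add_le_add (ih _ (hπ n t)) (le_iSup₂_of_le t ht le_rfl)

lemma iSup_edist_le_tsum_of_chain (f : T → E) (hF0 : F 0 = {t₀}) (hπ : ∀ k t, π k t ∈ F k)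
    (hcover : ∀ t, ∃ n, t ∈ F n) :
    ⨆ t, edist (f t) (f t₀) ≤ ∑' k, ⨆ s ∈ F (k + 1), edist (f s) (f (π k s)) :=
  iSup_le fun t =>
    let ⟨n, hn⟩ := hcover t
    (edist_le_sum_of_chain f hF0 hπ n t hn).trans (ENNReal.sum_le_tsum _)

theorem eLpNorm'_iSup_edist_le_of_nets [Countable T] [MeasurableSpace E] [OpensMeasurableSpace E]
    [SecondCountableTopology E] (hp : 1 ≤ p) {Y : T → X → E} (hY : ∀ t, Measurable (Y t))
    (hF0 : F 0 = {t₀}) (hcover : ∀ t, ∃ n, t ∈ F n) {ε : ℕ → ℝ≥0∞}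
    (hnet : ∀ k t, ∃ s ∈ F k, eLpNorm' (fun x => edist (Y t x) (Y s x)) p μ ≤ ε k) :
    eLpNorm' (fun x => ⨆ t, edist (Y t x) (Y t₀ x)) p μ ≤
      ∑' k, ε k * ((F (k + 1)).card : ℝ≥0∞) ^ (1 / p) := by
  choose π hπ hπε using hnet
  have hD : ∀ k, Measurable fun x => ⨆ s ∈ F (k + 1), edist (Y s x) (Y (π k s) x) :=
    fun k => Measurable.iSup fun s => Measurable.iSup fun _ => (hY s).edist (hY _)
  calc eLpNorm' (fun x => ⨆ t, edist (Y t x) (Y t₀ x)) p μ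
      ≤ eLpNorm' (fun x => ∑' k, ⨆ s ∈ F (k + 1), edist (Y s x) (Y (π k s) x)) p μ :=
        eLpNorm'_mono_enorm_ae (by positivity) (ae_of_all _ fun x =>
          iSup_edist_le_tsum_of_chain (fun t => Y t x) hF0 hπ hcover)
    _ ≤ ∑' k, eLpNorm' (fun x => ⨆ s ∈ F (k + 1), edist (Y s x) (Y (π k s) x)) p μ :=
        eLpNorm'_tsum_le hp fun k => (hD k).aemeasurable
    _ ≤ _ := ENNReal.tsum_le_tsum fun k => eLpNorm'_biSup_le (by positivity)
        (fun s _ => ((hY s).edist (hY _)).aemeasurable) fun s _ => hπε k s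

end Chaining

end MeasureTheory

lemma EReal.abs_le_of_neg_le_of_le {x : EReal} {R : ℝ≥0∞} (h₁ : -(R : EReal) ≤ x)
    (h₂ : x ≤ R) : x.abs ≤ R := by
  induction x using EReal.rec with
  | bot =>
    rw [le_bot_iff, EReal.neg_eq_bot_iff, EReal.coe_ennreal_eq_top_iff] at h₁
    simp [h₁]
  | coe r =>
    rcases eq_or_ne R ⊤ with rfl | hR
    · exact le_top
    rw [← EReal.coe_ennreal_toReal hR, ← EReal.coe_neg, EReal.coe_le_coe_iff] at h₁
    rw [← EReal.coe_ennreal_toReal hR, EReal.coe_le_coe_iff] at h₂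
    rw [EReal.abs_def, ENNReal.ofReal_le_iff_le_toReal hR]
    exact abs_le.2 ⟨h₁, h₂⟩
  | top =>
    rw [top_le_iff, EReal.coe_ennreal_eq_top_iff] at h₂
    simp [h₂]

lemma EReal.coe_le_coe_enorm (r : ℝ) : (r : EReal) ≤ (‖r‖ₑ : ℝ≥0∞) := by
  rw [Real.enorm_eq_ofReal_abs, EReal.coe_ennreal_ofReal, EReal.coe_le_coe_iff]
  exact (le_abs_self r).trans (le_max_left _ _)

lemma EReal.abs_iSup_coe_le_iSup_enorm {T : Type*} [Nonempty T] (f : T → ℝ) :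
    (⨆ t, (f t : EReal)).abs ≤ ⨆ t, ‖f t‖ₑ := by
  have hle : ∀ t, (‖f t‖ₑ : EReal) ≤ ((⨆ t, ‖f t‖ₑ : ℝ≥0∞) : EReal) := fun t =>
    EReal.coe_ennreal_le_coe_ennreal_iff.2 (le_iSup (fun t => ‖f t‖ₑ) t)
  refine EReal.abs_le_of_neg_le_of_le ?_
    (iSup_le fun t => (EReal.coe_le_coe_enorm _).trans (hle t))
  obtain ⟨t⟩ := ‹Nonempty T›
  calc -((⨆ t, ‖f t‖ₑ : ℝ≥0∞) : EReal) ≤ -(‖f t‖ₑ : EReal) := EReal.neg_le_neg_iff.2 (hle t)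
    _ ≤ f t := by
      rw [EReal.neg_le, ← EReal.coe_neg, ← enorm_neg]
      exact EReal.coe_le_coe_enorm _
    _ ≤ ⨆ t, (f t : EReal) := le_iSup (fun t => (f t : EReal)) t

lemma iSup_enorm_le_enorm_add_iSup_edist {T E : Type*} [SeminormedAddGroup E] (f : T → E)
    (t₀ : T) :
    ⨆ t, ‖f t‖ₑ ≤ ‖f t₀‖ₑ + ⨆ t, edist (f t) (f t₀) :=
  iSup_le fun t => calc
    ‖f t‖ₑ = edist (f t) 0 := (edist_zero_right _).symm
    _ ≤ edist (f t) (f t₀) + edist (f t₀) 0 := edist_triangle _ _ _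
    _ ≤ ‖f t₀‖ₑ + ⨆ t, edist (f t) (f t₀) := by
      rw [edist_zero_right, add_comm]
      gcongr
      exact le_iSup (fun t => edist (f t) (f t₀)) t

lemma lpNorm_eq_eLpNorm' {X : Type*} [MeasurableSpace X] (μ : Measure X) (f : X → ℝ) {p : ℝ}
    (hp : 0 ≤ p) : lpNorm μ f p = eLpNorm' f p μ := by
  simp only [_root_.lpNorm, eLpNorm'_eq_lintegral_enorm, Real.enorm_eq_ofReal_abs,
    ENNReal.ofReal_rpow_of_nonneg (abs_nonneg _) hp]

lemma lpNorm_sub_eq_eLpNorm'_edist {X : Type*} [MeasurableSpace X] (μ : Measure X) (f g : X → ℝ)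
    {p : ℝ} (hp : 0 ≤ p) :
    lpNorm μ (fun x => f x - g x) p = eLpNorm' (fun x => edist (f x) (g x)) p μ := by
  simp only [lpNorm_eq_eLpNorm' μ _ hp, edist_eq_enorm_sub, eLpNorm'_enorm]

lemma lpNormE_eq_eLpNorm' {X : Type*} [MeasurableSpace X] (μ : Measure X) (g : X → EReal)
    (p : ℝ) : lpNormE μ g p = eLpNorm' (fun x => (g x).abs) p μ := rfl

theorem entropy_bound_mri_general
    {X : Type*} [MeasurableSpace X] (μ : Measure X)
    (a : ℝ) (b : ℝ≥0∞) (ha : 1 ≤ a)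
    (θ : ℝ)
    (T : Type*) [Countable T]
    (Y : T → X → ℝ) (hYmeas : ∀ t, Measurable (Y t))
    (F : ℝ → ℕ → Finset T) (t₀ : ℝ → T)
    (hcover : ∀ p ∈ expSet a b, ∀ t : T, ∃ k, t ∈ F p k)
    (hF0 : ∀ p ∈ expSet a b, F p 0 = {t₀ p})
    (hnet : ∀ p ∈ expSet a b, ∀ k : ℕ, ∀ t : T, ∃ s ∈ F p k,
      lpNorm μ (fun x => Y t x - Y s x) p ≤ ENNReal.ofReal (θ ^ k))
    (N : (ℝ → ℝ≥0∞) → ℝ≥0∞)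
    (hNmono : ∀ g₁ g₂ : ℝ → ℝ≥0∞, (∀ p ∈ expSet a b, g₁ p ≤ g₂ p) → N g₁ ≤ N g₂) :
    N (fun p => lpNormE μ (fun x => ⨆ t, (Y t x : EReal)) p) ≤
      N (fun p => lpNorm μ (Y (t₀ p)) p +
        ∑' k : ℕ, ENNReal.ofReal (θ ^ k) * ((F p (k + 1)).card : ℝ≥0∞) ^ (1 / p)) := by
  refine hNmono _ _ fun p hp => ?_
  have hp1 : 1 ≤ p := ha.trans hp.1.le
  have hp0 : 0 ≤ p := zero_le_one.trans hp1
  have hchain := eLpNorm'_iSup_edist_le_of_nets (μ := μ) hp1 hYmeas (hF0 p hp) (hcover p hp)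
    (ε := fun k => ENNReal.ofReal (θ ^ k)) fun k t => by
      simpa only [lpNorm_sub_eq_eLpNorm'_edist μ _ _ hp0] using hnet p hp k t
  calc lpNormE μ (fun x => ⨆ t, (Y t x : EReal)) p
      ≤ eLpNorm' (fun x => ‖Y (t₀ p) x‖ₑ + ⨆ t, edist (Y t x) (Y (t₀ p) x)) p μ := by
        rw [lpNormE_eq_eLpNorm']
        have : Nonempty T := ⟨t₀ p⟩
        exact eLpNorm'_mono_enorm_ae hp0
          (ae_of_all _ fun x => (EReal.abs_iSup_coe_le_iSup_enorm (fun t => Y t x)).trans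
            (iSup_enorm_le_enorm_add_iSup_edist (fun t => Y t x) (t₀ p)))
    _ ≤ eLpNorm' (Y (t₀ p)) p μ + eLpNorm' (fun x => ⨆ t, edist (Y t x) (Y (t₀ p) x)) p μ := by
        rw [← eLpNorm'_enorm (f := Y (t₀ p))]
        exact eLpNorm'_add_le (hYmeas _).enorm.aestronglyMeasurable
          (Measurable.iSup fun t => (hYmeas t).edist (hYmeas _)).aestronglyMeasurable hp1
    _ ≤ _ := by
        rw [lpNorm_eq_eLpNorm' μ _ hp0]
        exact add_le_add le_rfl hchain

/-- Proposition 6 (maximal inequality in moment rearrangement invariant form). -/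
theorem entropy_bound_mri
    {X : Type*} [MeasurableSpace X] (μ : Measure X) [SigmaFinite μ]
    (a : ℝ) (b : ℝ≥0∞) (ha : 1 ≤ a) (hab : ENNReal.ofReal a < b)
    (θ : ℝ) (hθ0 : 0 < θ) (hθ1 : θ < 1)
    (T : Type*) [Countable T]
    (Y : T → X → ℝ) (hYmeas : ∀ t, Measurable (Y t))
    (hLp : ∀ t, ∀ p ∈ expSet a b, lpNorm μ (Y t) p < ⊤)
    (F : ℝ → ℕ → Finset T) (t₀ : ℝ → T)
    (hFmono : ∀ p ∈ expSet a b, Monotone (F p))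
    (hcover : ∀ p ∈ expSet a b, ∀ t : T, ∃ k, t ∈ F p k)
    (hF0 : ∀ p ∈ expSet a b, F p 0 = {t₀ p})
    (hnet : ∀ p ∈ expSet a b, ∀ k : ℕ, ∀ t : T, ∃ s ∈ F p k,
      lpNorm μ (fun x => Y t x - Y s x) p ≤ ENNReal.ofReal (θ ^ k))
    (N : (ℝ → ℝ≥0∞) → ℝ≥0∞)
    (hNmono : ∀ g₁ g₂ : ℝ → ℝ≥0∞, (∀ p ∈ expSet a b, g₁ p ≤ g₂ p) → N g₁ ≤ N g₂) :
    N (fun p => lpNormE μ (fun x => ⨆ t, (Y t x : EReal)) p) ≤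
      N (fun p => lpNorm μ (Y (t₀ p)) p +
        ∑' k : ℕ, ENNReal.ofReal (θ ^ k) * ((F p (k + 1)).card : ℝ≥0∞) ^ (1 / p)) :=
  entropy_bound_mri_general μ a b ha θ T Y hYmeas F t₀ hcover hF0 hnet N hNmono
end

section
/- Separability implies the supremum is determined by a countable subfamily. Let (X, Σ, μ) be a measure space, T a set, T̃ ⊆ T a countable subset, and Y : T × X → ℝ a function such that x ↦ Y(t,x) is measurable for each t ∈ T. Assume the separability condition: for every closed set Q ⊆ ℝ, the sets ⋂_{t∈T̃} {x : Y(t,x) ∈ Q} and ⋂_{t∈T} {x : Y(t,x) ∈ Q} are measurable and their symmetric difference is μ-null. Then for μ-almost every x ∈ X one has sup_{t∈T} Y(t,x) = sup_{t∈T̃} Y(t,x) (as elements of (−∞,∞]); in particular sup_{t∈T} Y(t,·) agrees μ-a.e. with a measurable function. -/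
open MeasureTheory ENNReal Set

/-- Separability implies the supremum is determined by a countable subfamily. -/
theorem separable_sup_ae_eq_countable
    {X : Type*} [MeasurableSpace X] (μ : Measure X)
    (T : Type*) (S : Set T) (hS : S.Countable)
    (Y : T → X → ℝ) (hYmeas : ∀ t, Measurable (Y t))
    (hsep : ∀ Q : Set ℝ, IsClosed Q →
      MeasurableSet (⋂ t ∈ S, {x | Y t x ∈ Q}) ∧
      MeasurableSet (⋂ t : T, {x | Y t x ∈ Q}) ∧
      μ (((⋂ t ∈ S, {x | Y t x ∈ Q}) \ (⋂ t : T, {x | Y t x ∈ Q})) ∪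
         ((⋂ t : T, {x | Y t x ∈ Q}) \ (⋂ t ∈ S, {x | Y t x ∈ Q}))) = 0) :
    (∀ᵐ x ∂μ, (⨆ t : T, (Y t x : EReal)) = ⨆ t : S, (Y t x : EReal)) ∧
    ∃ g : X → EReal, Measurable g ∧ ∀ᵐ x ∂μ, (⨆ t : T, (Y t x : EReal)) = g x := by
  classical
  -- the bad set indexed by rationals
  set D : ℚ → Set X := fun q =>
    ((⋂ t ∈ S, {x | Y t x ∈ Set.Iic (q : ℝ)}) \ (⋂ t : T, {x | Y t x ∈ Set.Iic (q : ℝ)})) ∪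
    ((⋂ t : T, {x | Y t x ∈ Set.Iic (q : ℝ)}) \ (⋂ t ∈ S, {x | Y t x ∈ Set.Iic (q : ℝ)})) with hD
  have hDnull : ∀ q : ℚ, μ (D q) = 0 := fun q => (hsep _ isClosed_Iic).2.2
  have hNnull : μ (⋃ q : ℚ, D q) = 0 := measure_iUnion_null hDnull
  have hae : ∀ᵐ x ∂μ, (⨆ t : T, (Y t x : EReal)) = ⨆ t : S, (Y t x : EReal) := by
    rw [ae_iff]
    refine measure_mono_null ?_ hNnull
    intro x hx
    simp only [Set.mem_setOf_eq] at hx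
    by_contra hxN
    apply hx
    have hle : (⨆ t : S, (Y t x : EReal)) ≤ ⨆ t : T, (Y t x : EReal) :=
      iSup_le fun t => le_iSup (fun t : T => (Y t x : EReal)) t.1
    refine le_antisymm ?_ hle
    by_contra hlt
    push_neg at hlt
    obtain ⟨q, hq1, hq2⟩ := EReal.exists_rat_btwn_of_lt hlt
    have hxS : x ∈ ⋂ t ∈ S, {y | Y t y ∈ Set.Iic (q : ℝ)} := by
      simp only [Set.mem_iInter, Set.mem_setOf_eq, Set.mem_Iic]
      intro t ht
      have : (Y t x : EReal) ≤ (q : ℝ) := by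
        refine le_trans (le_iSup (fun t : S => (Y t x : EReal)) ⟨t, ht⟩) ?_
        exact_mod_cast hq1.le
      exact_mod_cast this
    have hxT : x ∈ ⋂ t : T, {y | Y t y ∈ Set.Iic (q : ℝ)} := by
      by_contra hxT
      exact hxN (Set.mem_iUnion.2 ⟨q, Or.inl ⟨hxS, hxT⟩⟩)
    have : (⨆ t : T, (Y t x : EReal)) ≤ ((q : ℝ) : EReal) := by
      refine iSup_le fun t => ?_
      have := Set.mem_iInter.1 hxT t
      simp only [Set.mem_setOf_eq, Set.mem_Iic] at this
      exact_mod_cast this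
    exact absurd (lt_of_le_of_lt this (by exact_mod_cast hq2)) (lt_irrefl _)
  refine ⟨hae, fun x => ⨆ t : S, (Y t x : EReal), ?_, hae⟩
  have : Countable S := hS.to_subtype
  exact Measurable.iSup fun t : S =>
    (measurable_coe_real_ereal).comp (hYmeas t.1)
end
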